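/- If every string matched by r has length satisfying predicate φ, then every string matched by Repeat(r, k) has length n such that there exist n₁, n₂ satisfying φ(n₁), φ(n₂), n ≥ n₁·k, and n ≤ n₂·k. (Soundness of the length encoding for Repeat.) -/

import Mathlib

/-- `RepMatch M r k s` : `s` is a concatenation of exactly `k` strings each matching `r`. -/
def RepMatch {α R : Type*} (M : R → List α → Prop) (r : R) (k : ℕ) (s : List α) : Prop :=
  ∃ parts : List (List α), parts.length = k ∧ (∀ p ∈ parts, M r p) ∧ parts.flatten = s

/-- `ConcatMatch M r₁ r₂ s` : `s` splits as `s₁ ++ s₂` with `r₁` matching `s₁`, `r₂` matching `s₂`. -/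
def ConcatMatch {α R : Type*} (M : R → List α → Prop) (r₁ r₂ : R) (s : List α) : Prop :=
  ∃ s₁ s₂ : List α, s = s₁ ++ s₂ ∧ M r₁ s₁ ∧ M r₂ s₂

/-!
The `k` parts of `s` have lengths summing to `|s|`, so some part is at most, and some part at
least, the average length `|s| / k`. Both parts match `r`, so their lengths satisfy `φ` and serve
as `n₁` and `n₂`.
-/

namespace List

theorem sum_map_length_nsmul_eq {M : Type*} [AddCommMonoid M] (l : List M) :
    (l.map (l.length • ·)).sum = (l.map fun _ => l.sum).sum := by
  rw [map_const', sum_replicate, ← smul_sum]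

variable {M : Type*} [AddCommMonoid M] [LinearOrder M] [IsOrderedCancelAddMonoid M]

theorem exists_mem_length_nsmul_le_sum {l : List M} (hl : l ≠ []) :
    ∃ a ∈ l, l.length • a ≤ l.sum :=
  exists_le_of_sum_le hl _ _ (sum_map_length_nsmul_eq l).le

theorem exists_mem_sum_le_length_nsmul {l : List M} (hl : l ≠ []) :
    ∃ a ∈ l, l.sum ≤ l.length • a :=
  exists_le_of_sum_le hl _ _ (sum_map_length_nsmul_eq l).ge

end List

open List in
theorem RepMatch.exists_part_length_mul_bounds {α R : Type*} {M : R → List α → Prop} {r : R}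
    {k : ℕ} {s : List α} (hk : k ≠ 0) (hs : RepMatch M r k s) :
    ∃ p₁ p₂, M r p₁ ∧ M r p₂ ∧ p₁.length * k ≤ s.length ∧ s.length ≤ p₂.length * k := by
  obtain ⟨parts, rfl, hparts, rfl⟩ := hs
  have hne : parts.map length ≠ [] := by simpa using ne_nil_of_length_pos (Nat.pos_of_ne_zero hk)
  obtain ⟨_, hmem₁, hle⟩ := exists_mem_length_nsmul_le_sum hne
  obtain ⟨_, hmem₂, hge⟩ := exists_mem_sum_le_length_nsmul hne
  obtain ⟨p₁, hp₁, rfl⟩ := mem_map.1 hmem₁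
  obtain ⟨p₂, hp₂, rfl⟩ := mem_map.1 hmem₂
  rw [length_map, smul_eq_mul, ← length_flatten] at hle hge
  exact ⟨p₁, p₂, hparts p₁ hp₁, hparts p₂ hp₂, by linarith, by linarith⟩

theorem repeat_length_encoding {α R : Type*} (M : R → List α → Prop) (r : R) (k : ℕ)
    (hk : 1 ≤ k) (φ : ℕ → Prop) (h : ∀ s, M r s → φ s.length) :
    ∀ s : List α, RepMatch M r k s →
      ∃ n₁ n₂, φ n₁ ∧ φ n₂ ∧ n₁ * k ≤ s.length ∧ s.length ≤ n₂ * k := by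
  intro s hs
  obtain ⟨p₁, p₂, hp₁, hp₂, hle, hge⟩ := hs.exists_part_length_mul_bounds (by omega)
  exact ⟨p₁.length, p₂.length, h p₁ hp₁, h p₂ hp₂, hle, hge⟩
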